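/- Let (Γ,Z) be a homotopy coherent action of a group G on a topological space Z, X its strictification with G-action, retraction R and homotopy H, let S be a symmetric generating set of G containing the identity e, and for l ∈ ℕ set Y_l := {[e,t_k,g_{k−1},…,g_0,z] ∈ X : k ≤ l, g_0,…,g_{k−1} ∈ S^l}. Then: (i) Y_0 equals the image of Z under z ↦ [e,z], Y_l ⊆ Y_{l+1} for all l, and X = ⋃_{l∈ℕ} Y_l; (ii) for all l,r ∈ ℕ and every g ∈ S^r one has g·Y_l ⊆ Y_{l+r}; (iii) H(Y_l × [0,1]) ⊆ Y_l for every l, so H restricts to a deformation retraction of Y_l onto the image of Z; in particular the inclusion of Z into Y_l is a homotopy equivalence for every l. -/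
import Mathlib


open unitInterval

universe u v

/-- A homotopy coherent action of a group `G` on a topological space `Z`.

A point of the `k`-th summand `(G × [0,1])^k × G × Z` of the domain of `Γ` is encoded by the
data `(k, gs, ts, z)` where `gs n = g_n` for `n ≤ k` and `ts n = t_n` for `1 ≤ n ≤ k` (the
values of `gs` and `ts` outside these ranges are irrelevant by the field `junk`).  Continuity
of `Γ` is expressed, equivalently, as continuity in `(t,z)` for each fixed tuple of group
elements.  The remaining fields are the coherence conditions. -/
structure HCAction (G : Type u) [Group G] (Z : Type v) [TopologicalSpace Z] where
  Γ : ℕ → (ℕ → G) → (ℕ → I) → Z → Z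
  continuous : ∀ (k : ℕ) (gs : ℕ → G), Continuous fun p : (ℕ → I) × Z => Γ k gs p.1 p.2
  junk : ∀ (k : ℕ) (gs gs' : ℕ → G) (ts ts' : ℕ → I) (z : Z),
    (∀ n ≤ k, gs n = gs' n) → (∀ n, 1 ≤ n → n ≤ k → ts n = ts' n) →
    Γ k gs ts z = Γ k gs' ts' z
  rel_t0 : ∀ (k j : ℕ) (gs : ℕ → G) (ts : ℕ → I) (z : Z), 1 ≤ j → j ≤ k → ts j = 0 →
    Γ k gs ts z = Γ (k - j) (fun n => gs (n + j)) (fun n => ts (n + j)) (Γ (j - 1) gs ts z)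
  rel_t1 : ∀ (k j : ℕ) (gs : ℕ → G) (ts : ℕ → I) (z : Z), 1 ≤ j → j ≤ k → ts j = 1 →
    Γ k gs ts z =
      Γ (k - 1)
        (fun n => if n < j - 1 then gs n else if n = j - 1 then gs j * gs (j - 1) else gs (n + 1))
        (fun n => if n ≤ j - 1 then ts n else ts (n + 1)) z
  rel_g0 : ∀ (k : ℕ) (gs : ℕ → G) (ts : ℕ → I) (z : Z), 1 ≤ k → gs 0 = 1 →
    Γ k gs ts z = Γ (k - 1) (fun n => gs (n + 1)) (fun n => ts (n + 1)) z
  rel_gj : ∀ (k j : ℕ) (gs : ℕ → G) (ts : ℕ → I) (z : Z), 1 ≤ j → j ≤ k - 1 → gs j = 1 →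
    Γ k gs ts z =
      Γ (k - 1) (fun n => if n < j then gs n else gs (n + 1))
        (fun n => if n < j then ts n else if n = j then ts (j + 1) * ts j else ts (n + 1)) z
  rel_gk : ∀ (k : ℕ) (gs : ℕ → G) (ts : ℕ → I) (z : Z), 1 ≤ k → gs k = 1 →
    Γ k gs ts z = Γ (k - 1) gs ts z
  unit : ∀ (gs : ℕ → G) (ts : ℕ → I) (z : Z), gs 0 = 1 → Γ 0 gs ts z = z

namespace HCAction

variable {G : Type u} [Group G] [TopologicalSpace G] [DiscreteTopology G]
variable {Z : Type v} [TopologicalSpace Z]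

/-- The space of words `(g_k, t_k, …, g_0, z)` (with junk tails). -/
abbrev Word (G : Type u) (Z : Type v) := ℕ × (ℕ → G) × (ℕ → I) × Z

open Classical in
/-- The relations generating the equivalence relation defining the strictification. -/
inductive SRel (A : HCAction G Z) : Word G Z → Word G Z → Prop
  | junk (k : ℕ) (gs gs' : ℕ → G) (ts ts' : ℕ → I) (z : Z) :
      (∀ n ≤ k, gs n = gs' n) → (∀ n, 1 ≤ n → n ≤ k → ts n = ts' n) →
      SRel A (k, gs, ts, z) (k, gs', ts', z)
  | g0 (k : ℕ) (gs : ℕ → G) (ts : ℕ → I) (z : Z) : 1 ≤ k → gs 0 = 1 →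
      SRel A (k, gs, ts, z) (k - 1, fun n => gs (n + 1), fun n => ts (n + 1), z)
  | gj (k j : ℕ) (gs : ℕ → G) (ts : ℕ → I) (z : Z) : 1 ≤ j → j ≤ k - 1 → gs j = 1 →
      SRel A (k, gs, ts, z)
        (k - 1, fun n => if n < j then gs n else gs (n + 1),
          fun n => if n < j then ts n else if n = j then ts (j + 1) * ts j else ts (n + 1), z)
  | t1 (k j : ℕ) (gs : ℕ → G) (ts : ℕ → I) (z : Z) : 1 ≤ j → j ≤ k → ts j = 1 →
      SRel A (k, gs, ts, z)
        (k - 1,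
          fun n => if n < j - 1 then gs n else if n = j - 1 then gs j * gs (j - 1) else gs (n + 1),
          fun n => if n ≤ j - 1 then ts n else ts (n + 1), z)
  | t0 (k j : ℕ) (gs : ℕ → G) (ts : ℕ → I) (z : Z) : 1 ≤ j → j ≤ k → ts j = 0 →
      SRel A (k, gs, ts, z)
        (k - j, fun n => gs (n + j), fun n => ts (n + j), A.Γ (j - 1) gs ts z)

/-- The strictification of a homotopy coherent action: the quotient of the word space by the
equivalence relation generated by `SRel`, with the quotient topology. -/
def Strict (A : HCAction G Z) : Type (max u v) := Quot (SRel A)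

instance (A : HCAction G Z) : TopologicalSpace (Strict A) :=
  instTopologicalSpaceQuot

/-- The class of a word in the strictification. -/
def wmk (A : HCAction G Z) (w : Word G Z) : Strict A := Quot.mk _ w

/-- The canonical embedding `Z → X`, `z ↦ [e, z]`. -/
def emb (A : HCAction G Z) (z : Z) : Strict A := wmk A (0, fun _ => 1, fun _ => 0, z)

end HCAction

namespace HCAction

open Pointwise

variable {G : Type u} [Group G] [TopologicalSpace G] [DiscreteTopology G]
variable {Z : Type v} [TopologicalSpace Z]

/-- The filtration `Y_l = {[e, t_k, g_{k-1}, …, g_0, z] : k ≤ l, g_i ∈ S^l}` of the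
strictification associated to a generating set `S`. -/
def Yfil (A : HCAction G Z) (S : Set G) (l : ℕ) : Set (Strict A) :=
  {x | ∃ (k : ℕ) (gs : ℕ → G) (ts : ℕ → I) (z : Z),
    k ≤ l ∧ gs k = 1 ∧ (∀ n < k, gs n ∈ S ^ l) ∧ x = wmk A (k, gs, ts, z)}

set_option linter.unusedSectionVars false

section Helpers

variable (A : HCAction G Z)

theorem wmk_junk (k : ℕ) (gs gs' : ℕ → G) (ts ts' : ℕ → I) (z : Z)
    (hg : ∀ n ≤ k, gs n = gs' n) (ht : ∀ n, 1 ≤ n → n ≤ k → ts n = ts' n) :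
    wmk A (k, gs, ts, z) = wmk A (k, gs', ts', z) :=
  Quot.sound (SRel.junk k gs gs' ts ts' z hg ht)

/-- Adding a trivial pair `(e, 1)` on top of a word does not change its class. -/
theorem wmk_extend (k : ℕ) (gs : ℕ → G) (ts : ℕ → I) (z : Z) :
    wmk A (k + 1, fun n => if n = k + 1 then 1 else gs n,
      fun n => if n = k + 1 then 1 else ts n, z) = wmk A (k, gs, ts, z) := by
  have h1 : wmk A (k + 1, fun n => if n = k + 1 then 1 else gs n,
      fun n => if n = k + 1 then 1 else ts n, z) =
      wmk A (k + 1 - 1,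
        fun n => if n < k + 1 - 1 then (if n = k + 1 then 1 else gs n)
          else if n = k + 1 - 1 then
            (if k + 1 = k + 1 then 1 else gs (k + 1)) *
              (if k + 1 - 1 = k + 1 then 1 else gs (k + 1 - 1))
          else (if n + 1 = k + 1 then 1 else gs (n + 1)),
        fun n => if n ≤ k + 1 - 1 then (if n = k + 1 then (1 : I) else ts n)
          else (if n + 1 = k + 1 then (1 : I) else ts (n + 1)), z) :=
    Quot.sound (SRel.t1 (A := A) (k + 1) (k + 1) _ _ z (by omega) le_rfl (by simp))
  refine h1.trans ?_
  simp only [Nat.add_sub_cancel]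
  refine wmk_junk A k _ gs _ ts z ?_ ?_
  · intro n hn
    rcases lt_or_eq_of_le hn with h | h
    · simp [h, show n ≠ k + 1 by omega]
    · subst h
      simp [show ¬ (n < n) by omega, show n ≠ n + 1 by omega]
  · intro n h1n hnk
    simp [hnk, show n ≠ k + 1 by omega]

/-- Every element of `G` lies in some power of a symmetric generating set. -/
theorem exists_mem_pow (S : Set G) (hS1 : (1 : G) ∈ S) (hSsymm : S⁻¹ = S)
    (hSgen : Subgroup.closure S = ⊤) (g : G) : ∃ m : ℕ, g ∈ S ^ m := by
  have hg : g ∈ Subgroup.closure S := hSgen ▸ Subgroup.mem_top g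
  refine Subgroup.closure_induction (p := fun x _ => ∃ m : ℕ, x ∈ S ^ m) ?_ ?_ ?_ ?_ hg
  · exact fun x hx => ⟨1, by simpa using hx⟩
  · exact ⟨0, by simp⟩
  · rintro x y _ _ ⟨m, hm⟩ ⟨m', hm'⟩
    exact ⟨m + m', by rw [pow_add]; exact Set.mul_mem_mul hm hm'⟩
  · rintro x _ ⟨m, hm⟩
    refine ⟨m, ?_⟩
    rw [← hSsymm, inv_pow]
    exact Set.inv_mem_inv.2 hm

end Helpers

/-- properties of the filtration `(Y_l)_l` of the strictification. -/
theorem statement6 (A : HCAction G Z) (S : Set G)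
    (hS1 : (1 : G) ∈ S) (hSsymm : S⁻¹ = S) (hSgen : Subgroup.closure S = ⊤)
    -- the `G`-action on the strictification
    (act : G → Strict A → Strict A)
    (hact : ∀ (g : G) (k : ℕ) (gs : ℕ → G) (ts : ℕ → I) (z : Z),
      act g (wmk A (k, gs, ts, z)) = wmk A (k, Function.update gs k (g * gs k), ts, z))
    -- its retraction
    (R : Strict A → Z) (hRcont : Continuous R)
    (hR : ∀ (k : ℕ) (gs : ℕ → G) (ts : ℕ → I) (z : Z),
      R (wmk A (k, gs, ts, z)) = A.Γ k gs ts z)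
    -- and its homotopy
    (H : Strict A × I → Strict A) (hHcont : Continuous H)
    (hH : ∀ (k : ℕ) (gs : ℕ → G) (ts : ℕ → I) (z : Z) (u : I),
      H (wmk A (k, gs, ts, z), u) =
        wmk A (k + 1, fun n => if n = k + 1 then 1 else gs n,
          fun n => if n = k + 1 then u else ts n, z)) :
    -- (i)
    (Yfil A S 0 = Set.range (emb A)) ∧
    (∀ l : ℕ, Yfil A S l ⊆ Yfil A S (l + 1)) ∧
    ((⋃ l : ℕ, Yfil A S l) = Set.univ) ∧
    -- (ii)
    (∀ (l r : ℕ) (g : G), g ∈ S ^ r → ∀ x ∈ Yfil A S l, act g x ∈ Yfil A S (l + r)) ∧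
    -- (iii): H preserves each Y_l …
    (∀ (l : ℕ) (u : I), ∀ x ∈ Yfil A S l, H (x, u) ∈ Yfil A S l) ∧
    -- … so the inclusion of Z into Y_l is a homotopy equivalence
    (∀ l : ℕ, ∃ e : ContinuousMap.HomotopyEquiv Z (Yfil A S l),
      ∀ z : Z, (e.toFun z : Strict A) = emb A z) := by
  classical
  have hmono : ∀ {a b : ℕ}, a ≤ b → S ^ a ⊆ S ^ b := fun h => Set.pow_subset_pow_right hS1 h
  have hemb_mem : ∀ (l : ℕ) (z : Z), emb A z ∈ Yfil A S l := by
    intro l z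
    exact ⟨0, fun _ => 1, fun _ => 0, z, Nat.zero_le l, rfl,
      fun n hn => absurd hn (Nat.not_lt_zero n), rfl⟩
  -- part (i), first statement
  have part1 : Yfil A S 0 = Set.range (emb A) := by
    ext x
    constructor
    · rintro ⟨k, gs, ts, z, hk0, hg, -, rfl⟩
      interval_cases k
      refine ⟨z, ?_⟩
      exact wmk_junk A 0 (fun _ => 1) gs (fun _ => 0) ts z
        (fun n hn => by rw [Nat.le_zero.mp hn, hg]) (fun n h1 h0 => by omega)
    · rintro ⟨z, rfl⟩
      exact hemb_mem 0 z
  -- part (i), second statement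
  have part2 : ∀ l : ℕ, Yfil A S l ⊆ Yfil A S (l + 1) := by
    rintro l x ⟨k, gs, ts, z, hk, hg, hmem, rfl⟩
    exact ⟨k, gs, ts, z, by omega, hg, fun n hn => hmono (by omega) (hmem n hn), rfl⟩
  -- part (i), third statement
  have part3 : (⋃ l : ℕ, Yfil A S l) = Set.univ := by
    ext x
    simp only [Set.mem_iUnion, Set.mem_univ, iff_true]
    obtain ⟨⟨k, gs, ts, z⟩, rfl⟩ := Quot.exists_rep x
    choose f hf using fun n => exists_mem_pow S hS1 hSsymm hSgen (gs n)
    refine ⟨max (k + 1) ((Finset.range (k + 1)).sup f), k + 1,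
      fun n => if n = k + 1 then 1 else gs n, fun n => if n = k + 1 then 1 else ts n, z,
      le_max_left _ _, by simp, ?_, (wmk_extend A k gs ts z).symm⟩
    intro n hn
    have hne : n ≠ k + 1 := by omega
    simp only [hne, if_false]
    exact hmono (le_trans (Finset.le_sup (Finset.mem_range.mpr hn)) (le_max_right _ _)) (hf n)
  -- part (ii)
  have part4 : ∀ (l r : ℕ) (g : G), g ∈ S ^ r → ∀ x ∈ Yfil A S l, act g x ∈ Yfil A S (l + r) := by
    rintro l r g hg x ⟨k, gs, ts, z, hk, hgk, hmem, rfl⟩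
    rw [hact]
    rcases Nat.eq_zero_or_pos r with rfl | hr
    · have hg1 : g = 1 := by simpa using hg
      subst hg1
      rw [one_mul, Function.update_eq_self]
      exact ⟨k, gs, ts, z, by omega, hgk, fun n hn => by simpa using hmem n hn, rfl⟩
    · refine ⟨k + 1, fun n => if n = k + 1 then 1 else Function.update gs k (g * gs k) n,
        fun n => if n = k + 1 then 1 else ts n, z, by omega, by simp, ?_,
        (wmk_extend A k (Function.update gs k (g * gs k)) ts z).symm⟩
      intro n hn
      have hne : n ≠ k + 1 := by omega
      by_cases hnk : n = k
      · subst hnk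
        simp only [hne, if_false, Function.update_self, hgk, mul_one]
        exact hmono (by omega) hg
      · have hnlt : n < k := by omega
        simp only [hne, if_false, Function.update_of_ne hnk]
        exact hmono (by omega) (hmem n hnlt)
  -- part (iii): H preserves each Y_l
  have part5 : ∀ (l : ℕ) (u : I), ∀ x ∈ Yfil A S l, H (x, u) ∈ Yfil A S l := by
    rintro l u x ⟨k, gs, ts, z, hk, hgk, hmem, rfl⟩
    rw [hH]
    set gsH : ℕ → G := fun n => if n = k + 1 then 1 else gs n with hgsH
    set tsH : ℕ → I := fun n => if n = k + 1 then u else ts n with htsH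
    rcases Nat.eq_zero_or_pos k with rfl | hkpos
    · -- k = 0 : use the relation for g₀ = e
      refine ⟨0, fun n => gsH (n + 1), fun n => tsH (n + 1), z, Nat.zero_le l, by simp [hgsH],
        fun n hn => absurd hn (Nat.not_lt_zero n), ?_⟩
      exact Quot.sound (SRel.g0 (A := A) 1 gsH tsH z le_rfl (by simp [hgsH, hgk]))
    · -- k ≥ 1 : use the relation for g_j = e with j = k
      refine ⟨k, fun n => if n < k then gsH n else gsH (n + 1),
        fun n => if n < k then tsH n else if n = k then tsH (k + 1) * tsH k else tsH (n + 1), z,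
        hk, by simp [hgsH], ?_, ?_⟩
      · intro n hn
        simp only [hn, if_true, hgsH, show n ≠ k + 1 by omega, if_false]
        exact hmem n hn
      · exact Quot.sound (SRel.gj (A := A) (k + 1) k gsH tsH z hkpos (by omega)
          (by simp [hgsH, show k ≠ k + 1 by omega, hgk]))
  -- H at time 1 is the identity
  have hH1 : ∀ x : Strict A, H (x, 1) = x := by
    intro x
    obtain ⟨⟨k, gs, ts, z⟩, rfl⟩ := Quot.exists_rep x
    have hx : (Quot.mk (SRel A) (k, gs, ts, z) : Strict A) = wmk A (k, gs, ts, z) := rfl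
    rw [hx, hH]
    exact wmk_extend A k gs ts z
  -- H at time 0 is the retraction followed by the embedding
  have hH0 : ∀ x : Strict A, H (x, 0) = emb A (R x) := by
    intro x
    obtain ⟨⟨k, gs, ts, z⟩, rfl⟩ := Quot.exists_rep x
    have hx : (Quot.mk (SRel A) (k, gs, ts, z) : Strict A) = wmk A (k, gs, ts, z) := rfl
    rw [hx, hH, hR]
    set gsH : ℕ → G := fun n => if n = k + 1 then 1 else gs n with hgsH
    set tsH : ℕ → I := fun n => if n = k + 1 then (0 : I) else ts n with htsH
    have h1 := Quot.sound (SRel.t0 (A := A) (k + 1) (k + 1) gsH tsH z (by omega) le_rfl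
      (by simp [htsH]))
    simp only [Nat.sub_self, Nat.add_sub_cancel] at h1
    refine h1.trans ?_
    have hΓ : A.Γ k gsH tsH z = A.Γ k gs ts z :=
      A.junk k gsH gs tsH ts z (fun n hn => by simp [hgsH, show n ≠ k + 1 by omega])
        (fun n h1n hnk => by simp [htsH, show n ≠ k + 1 by omega])
    rw [hΓ]
    exact wmk_junk A 0 (fun n => gsH (n + (k + 1))) (fun _ => 1)
      (fun n => tsH (n + (k + 1))) (fun _ => 0) (A.Γ k gs ts z)
      (fun n hn => by rw [Nat.le_zero.mp hn]; simp [hgsH]) (fun n h1 h0 => by omega)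
  -- continuity of the embedding
  have hembc : Continuous (emb A) := by
    have : emb A = (Quot.mk (SRel A)) ∘
        (fun z : Z => ((0 : ℕ), fun _ => (1 : G), fun _ => (0 : I), z)) := rfl
    rw [this]
    exact continuous_quot_mk.comp (by fun_prop)
  refine ⟨part1, part2, part3, part4, part5, ?_⟩
  intro l
  refine ⟨⟨⟨fun z => ⟨emb A z, hemb_mem l z⟩, hembc.subtype_mk _⟩,
    ⟨fun x => R x.1, hRcont.comp continuous_subtype_val⟩, ?_, ?_⟩, fun z => rfl⟩
  · -- left inverse : R ∘ emb = id on Z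
    have : (ContinuousMap.mk (fun x : Yfil A S l => R x.1)
          (hRcont.comp continuous_subtype_val)).comp
        (ContinuousMap.mk (fun z => (⟨emb A z, hemb_mem l z⟩ : Yfil A S l))
          (hembc.subtype_mk _)) = ContinuousMap.id Z := by
      ext z
      show R (wmk A (0, fun _ => 1, fun _ => 0, z)) = z
      rw [hR, A.unit _ _ _ rfl]
    rw [this]
  · -- right inverse : emb ∘ R homotopic to id via H
    have hc : Continuous (fun p : I × (Yfil A S l) =>
        (⟨H (p.2.1, p.1), part5 l p.1 p.2.1 p.2.2⟩ : Yfil A S l)) :=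
      (hHcont.comp (by fun_prop)).subtype_mk _
    exact ⟨{ toContinuousMap := ⟨_, hc⟩
             map_zero_left := fun x => Subtype.ext (hH0 x.1)
             map_one_left := fun x => Subtype.ext (hH1 x.1) }⟩

end HCAction
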